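/- arXiv:math/0501147 — 3 statements merged into one kernel-verified Lean document; each statement's English description precedes it below -/
import Mathlib

section
/- The generating function C(z) = Σ_{n≥0} c_n z^n for the number c_n of (k,m)-ary trees of order n satisfies the functional equation C = (1 + z·C^m)^k. -/
open Polynomial

inductive PlaneTree : Type where
  | node : List PlaneTree → PlaneTree

namespace PlaneTree

/-- total number of vertices -/
def numVertices : PlaneTree → ℕ
  | node ts => 1 + (ts.attach.map (fun t => numVertices t.1)).sum
decreasing_by simp only [PlaneTree.node.sizeOf_spec]; exact Nat.lt_add_left 1 (List.sizeOf_lt_of_mem t.2)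

/-- number of internal vertices (vertices with at least one child) -/
def numInternal : PlaneTree → ℕ
  | node ts => (if ts.isEmpty then 0 else 1) + (ts.attach.map (fun t => numInternal t.1)).sum
decreasing_by simp only [PlaneTree.node.sizeOf_spec]; exact Nat.lt_add_left 1 (List.sizeOf_lt_of_mem t.2)

/-- product of `g h_v` over all internal vertices `v`, where `h_v` is the number of
internal vertices of the subtree rooted at `v` -/
def internalHookProd {α : Type} [CommMonoid α] (g : ℕ → α) : PlaneTree → α
  | node ts =>
    (if ts.isEmpty then 1 else g (numInternal (node ts))) *
      (ts.attach.map (fun t => internalHookProd g t.1)).prod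
decreasing_by simp only [PlaneTree.node.sizeOf_spec]; exact Nat.lt_add_left 1 (List.sizeOf_lt_of_mem t.2)

/-- product of `g h_v` over all vertices `v`, where `h_v` is the number of
vertices of the subtree rooted at `v` -/
def vertexHookProd {α : Type} [CommMonoid α] (g : ℕ → α) : PlaneTree → α
  | node ts =>
    g (numVertices (node ts)) * (ts.attach.map (fun t => vertexHookProd g t.1)).prod
decreasing_by simp only [PlaneTree.node.sizeOf_spec]; exact Nat.lt_add_left 1 (List.sizeOf_lt_of_mem t.2)

/-- every internal vertex has exactly `a` children -/
def IsFullAry (a : ℕ) : PlaneTree → Prop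
  | node ts => (ts.length = 0 ∨ ts.length = a) ∧ ∀ t ∈ ts, IsFullAry a t

/-- `IsKMAry k m b T`: with the root of `T` viewed as being on a level of parity `b`
(`b = false` meaning even), every vertex on an even level has `k` children and
every vertex on an odd level has `m` or `0` children. -/
def IsKMAry (k m : ℕ) : Bool → PlaneTree → Prop
  | b, node ts =>
    (if b then ts.length = m ∨ ts.length = 0 else ts.length = k) ∧
      ∀ t ∈ ts, IsKMAry k m (!b) t

/-- number of vertices on levels of parity `b`, the root having parity `cur` -/
def parityVertices (b cur : Bool) : PlaneTree → ℕ
  | node ts =>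
    (if cur = b then 1 else 0) + (ts.attach.map (fun t => parityVertices b (!cur) t.1)).sum
termination_by T => sizeOf T
decreasing_by simp only [PlaneTree.node.sizeOf_spec]; exact Nat.lt_add_left 1 (List.sizeOf_lt_of_mem t.2)

/-- number of internal vertices on levels of parity `b`, the root having parity `cur` -/
def parityInternal (b cur : Bool) : PlaneTree → ℕ
  | node ts =>
    (if cur = b ∧ ¬ts.isEmpty then 1 else 0) +
      (ts.attach.map (fun t => parityInternal b (!cur) t.1)).sum
termination_by T => sizeOf T
decreasing_by simp only [PlaneTree.node.sizeOf_spec]; exact Nat.lt_add_left 1 (List.sizeOf_lt_of_mem t.2)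

/-- the order of a `(k,m)`-ary tree: the number of internal (crucial) vertices on odd levels -/
def kmOrder (T : PlaneTree) : ℕ := parityInternal true false T

end PlaneTree

/-!
Deleting the root of a `(k,m)`-ary tree leaves a `k`-tuple of trees rooted on an odd level, and
such a tree is either a leaf or a vertex of degree `m` (the vertices counted by the order) carrying
an `m`-tuple of `(k,m)`-ary trees. With `D` the generating function of the odd-rooted trees this
gives `C = D^k` and `D = 1 + z C^m`, since a weight additive over a product multiplies generating
functions. The same recursion shows, by strong induction on the order, that all the counts are
finite.
-/

open Finset

section CountingSeries

variable {R : Type*} [Semiring R] {α β : Type*}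

variable (R) in
/-- `Nat.card` is `0` on infinite types, hence the finiteness hypotheses on the fibres below. -/
noncomputable def countingSeries (w : α → ℕ) : PowerSeries R :=
  PowerSeries.mk fun n => (Nat.card {a // w a = n} : R)

lemma coeff_countingSeries (w : α → ℕ) (n : ℕ) :
    PowerSeries.coeff n (countingSeries R w) = Nat.card {a // w a = n} :=
  PowerSeries.coeff_mk _ _

lemma countingSeries_subtype (p : α → Prop) (w : α → ℕ) :
    countingSeries R (fun a : Subtype p => w a) =
      PowerSeries.mk fun n => (Nat.card {a // p a ∧ w a = n} : R) := by
  ext n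
  rw [coeff_countingSeries, PowerSeries.coeff_mk,
    Nat.card_congr (Equiv.subtypeSubtypeEquivSubtypeInter p (w · = n))]

def Equiv.fiberCongr {v : α → ℕ} {w : β → ℕ} (e : α ≃ β) (h : ∀ a, w (e a) = v a) (n : ℕ) :
    {a // v a = n} ≃ {b // w b = n} :=
  e.subtypeEquiv fun a => by rw [h]

lemma countingSeries_congr {v : α → ℕ} {w : β → ℕ} (e : α ≃ β) (h : ∀ a, w (e a) = v a) :
    countingSeries R v = countingSeries R w := by
  ext n
  rw [coeff_countingSeries, coeff_countingSeries, Nat.card_congr (e.fiberCongr h n)]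

def prodFiberEquiv (v : α → ℕ) (w : β → ℕ) (n : ℕ) :
    {p : α × β // v p.1 + w p.2 = n} ≃
      Σ ij : antidiagonal n, {a // v a = ij.1.1} × {b // w b = ij.1.2} where
  toFun p := ⟨⟨(v p.1.1, w p.1.2), mem_antidiagonal.mpr p.2⟩, ⟨p.1.1, rfl⟩, ⟨p.1.2, rfl⟩⟩
  invFun x := ⟨(x.2.1.1, x.2.2.1), by rw [x.2.1.2, x.2.2.2]; exact mem_antidiagonal.mp x.1.2⟩
  left_inv _ := rfl
  right_inv := by
    rintro ⟨⟨⟨i, j⟩, hij⟩, ⟨a, ha⟩, ⟨b, hb⟩⟩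
    dsimp only at ha hb
    subst ha hb
    rfl

lemma finite_prod_fiber {v : α → ℕ} {w : β → ℕ} {n : ℕ} (hv : ∀ i ≤ n, Finite {a // v a = i})
    (hw : ∀ i ≤ n, Finite {b // w b = i}) : Finite {p : α × β // v p.1 + w p.2 = n} := by
  have (ij : antidiagonal n) : Finite ({a // v a = ij.1.1} × {b // w b = ij.1.2}) := by
    have hij := mem_antidiagonal.mp ij.2
    have := hv ij.1.1 (by omega)
    have := hw ij.1.2 (by omega)
    infer_instance
  exact Finite.of_equiv _ (prodFiberEquiv v w n).symm

lemma countingSeries_prod {v : α → ℕ} {w : β → ℕ} (hv : ∀ n, Finite {a // v a = n})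
    (hw : ∀ n, Finite {b // w b = n}) :
    countingSeries R (fun p : α × β => v p.1 + w p.2) =
      countingSeries R v * countingSeries R w := by
  ext n
  simp only [PowerSeries.coeff_mul, coeff_countingSeries, Nat.card_congr (prodFiberEquiv v w n),
    Nat.card_sigma, Nat.card_prod]
  rw [sum_coe_sort (antidiagonal n) fun ij =>
    Nat.card {a // v a = ij.1} * Nat.card {b // w b = ij.2}]
  push_cast
  rfl

end CountingSeries

section Tuples

variable {R : Type*} [Semiring R] {α : Type*}

instance : Unique {l : List α // l.length = 0} where
  default := ⟨[], rfl⟩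
  uniq l := Subtype.ext (List.length_eq_zero_iff.mp l.2)

def List.lengthSuccEquiv (j : ℕ) :
    α × {l : List α // l.length = j} ≃ {l : List α // l.length = j + 1} where
  toFun p := ⟨p.1 :: p.2.1, by simp [p.2.2]⟩
  invFun l := (l.1.head (List.ne_nil_of_length_eq_add_one l.2), ⟨l.1.tail, by simp [l.2]⟩)
  left_inv _ := rfl
  right_inv l := Subtype.ext (List.cons_head_tail _)

lemma finite_tuple_fiber {w : α → ℕ} {n : ℕ} (hw : ∀ i ≤ n, Finite {a // w a = i}) (j : ℕ) :
    ∀ i ≤ n, Finite {l : {l : List α // l.length = j} // (l.1.map w).sum = i} := by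
  induction j with
  | zero => intro i _; infer_instance
  | succ j ih =>
    intro i hi
    have := finite_prod_fiber (fun i' hi' => hw i' (hi'.trans hi))
      (fun i' hi' => ih i' (hi'.trans hi))
    exact Finite.of_equiv _ ((List.lengthSuccEquiv j).fiberCongr
      (v := fun p => w p.1 + (p.2.1.map w).sum) (fun _ => rfl) i)

lemma countingSeries_tuple {w : α → ℕ} (hw : ∀ n, Finite {a // w a = n}) (j : ℕ) :
    countingSeries R (fun l : {l : List α // l.length = j} => (l.1.map w).sum) =
      countingSeries R w ^ j := by
  induction j with
  | zero =>
    ext n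
    have hdef : (default : {l : List α // l.length = 0}).1 = [] := rfl
    rcases n with _ | n <;> simp [coeff_countingSeries, PowerSeries.coeff_one,
      Fintype.card_subtype, filter_singleton, hdef]
  | succ j ih =>
    have hfin (n : ℕ) := finite_tuple_fiber (n := n) (fun i _ => hw i) j n le_rfl
    rw [pow_succ', ← ih, ← countingSeries_prod hw hfin]
    refine (countingSeries_congr (List.lengthSuccEquiv j) ?_).symm
    exact fun _ => rfl

end Tuples

section OptionWeight

variable {R : Type*} [Semiring R] {α : Type*}

def optionFiberZeroEquiv (w : α → ℕ) : {o : Option α // o.elim 0 (w · + 1) = 0} ≃ Unit where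
  toFun _ := ()
  invFun _ := ⟨none, rfl⟩
  left_inv | ⟨none, _⟩ => rfl
  right_inv _ := rfl

def optionFiberSuccEquiv (w : α → ℕ) (n : ℕ) :
    {o : Option α // o.elim 0 (w · + 1) = n + 1} ≃ {a // w a = n} where
  toFun o := match o with
    | ⟨some a, h⟩ => ⟨a, Nat.succ_injective h⟩
  invFun a := ⟨some a.1, congrArg (· + 1) a.2⟩
  left_inv | ⟨some _, _⟩ => rfl
  right_inv _ := rfl

lemma countingSeries_option (w : α → ℕ) :
    countingSeries R (fun o : Option α => o.elim 0 (w · + 1)) =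
      1 + PowerSeries.X * countingSeries R w := by
  ext (_ | n)
  · simp [coeff_countingSeries, Nat.card_congr (optionFiberZeroEquiv w)]
  · simp [coeff_countingSeries, Nat.card_congr (optionFiberSuccEquiv w n),
      PowerSeries.coeff_succ_X_mul]

end OptionWeight

lemma List.attachWith_unattach {α : Type*} {p : α → Prop} (l : List {x // p x})
    (h : ∀ a ∈ l.unattach, p a) : l.unattach.attachWith p h = l :=
  List.ext_getElem (by simp) fun _ _ _ => by simp

namespace PlaneTree

variable {R : Type*} [Semiring R] {k m : ℕ}

lemma isKMAry_false_node {ts : List PlaneTree} :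
    IsKMAry k m false (node ts) ↔ ts.length = k ∧ ∀ t ∈ ts, IsKMAry k m true t := by
  simp [IsKMAry]

lemma isKMAry_true_node {ts : List PlaneTree} :
    IsKMAry k m true (node ts) ↔
      (ts.length = m ∨ ts.length = 0) ∧ ∀ t ∈ ts, IsKMAry k m false t := by
  simp [IsKMAry]

def oddRootOrder (T : PlaneTree) : ℕ := parityInternal true true T

lemma parityInternal_node (b cur : Bool) (ts : List PlaneTree) :
    parityInternal b cur (node ts) =
      (if cur = b ∧ ¬ts.isEmpty then 1 else 0) + (ts.map (parityInternal b (!cur))).sum := by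
  rw [parityInternal, ← List.attach_map_val (l := ts) (f := parityInternal b (!cur))]

lemma kmOrder_node (ts : List PlaneTree) : kmOrder (node ts) = (ts.map oddRootOrder).sum := by
  rw [kmOrder, parityInternal_node, if_neg (by simp), zero_add]
  rfl

lemma oddRootOrder_node (ts : List PlaneTree) :
    oddRootOrder (node ts) = if ts = [] then 0 else (ts.map kmOrder).sum + 1 := by
  by_cases h : ts = []
  · simp [oddRootOrder, parityInternal_node, h]
  · rw [oddRootOrder, parityInternal_node, if_pos ⟨rfl, by simpa using h⟩, if_neg h, Nat.add_comm]
    rfl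

abbrev EvenKMTree (k m : ℕ) : Type := {T : PlaneTree // IsKMAry k m false T}

abbrev OddKMTree (k m : ℕ) : Type := {T : PlaneTree // IsKMAry k m true T}

def evenKMTreeEquiv : {l : List (OddKMTree k m) // l.length = k} ≃ EvenKMTree k m where
  toFun l := ⟨node l.1.unattach,
    isKMAry_false_node.mpr ⟨by simp [l.2], fun _ ht => (List.mem_unattach.mp ht).1⟩⟩
  invFun
    | ⟨node ts, h⟩ =>
      ⟨ts.attachWith _ (isKMAry_false_node.mp h).2, by simp [(isKMAry_false_node.mp h).1]⟩
  left_inv l := Subtype.ext (List.attachWith_unattach _ _)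
  right_inv | ⟨node ts, h⟩ => by simp

lemma kmOrder_evenKMTreeEquiv (l : {l : List (OddKMTree k m) // l.length = k}) :
    kmOrder (evenKMTreeEquiv l).1 = (l.1.map fun T => oddRootOrder T.1).sum := by
  simp [evenKMTreeEquiv, kmOrder_node]

def oddKMTreeEquiv (hm : 0 < m) :
    Option {l : List (EvenKMTree k m) // l.length = m} ≃ OddKMTree k m where
  toFun
    | none => ⟨node [], isKMAry_true_node.mpr ⟨Or.inr rfl, by simp⟩⟩
    | some l => ⟨node l.1.unattach,
        isKMAry_true_node.mpr ⟨Or.inl (by simp [l.2]), fun _ ht => (List.mem_unattach.mp ht).1⟩⟩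
  invFun
    | ⟨node [], _⟩ => none
    | ⟨node (t :: ts), h⟩ => some ⟨(t :: ts).attachWith _ (isKMAry_true_node.mp h).2,
        by simpa using (isKMAry_true_node.mp h).1⟩
  left_inv
    | none => rfl
    | some ⟨[], hl⟩ => absurd hl hm.ne
    | some ⟨t :: ts, hl⟩ => by simp [List.attachWith_unattach]
  right_inv
    | ⟨node [], _⟩ => rfl
    | ⟨node (t :: ts), h⟩ => by simp

lemma oddRootOrder_oddKMTreeEquiv (hm : 0 < m)
    (o : Option {l : List (EvenKMTree k m) // l.length = m}) :
    oddRootOrder (oddKMTreeEquiv hm o).1 =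
      o.elim 0 fun l => (l.1.map fun T => kmOrder T.1).sum + 1 := by
  rcases o with _ | ⟨l, hl⟩
  · simp [oddKMTreeEquiv, oddRootOrder_node]
  · have : l.unattach ≠ [] := List.ne_nil_of_length_pos (by rw [List.length_unattach]; omega)
    simp [oddKMTreeEquiv, oddRootOrder_node, this]

lemma finite_oddRootOrder_fiber (hm : 0 < m) {n : ℕ}
    (h : ∀ i < n, Finite {T : EvenKMTree k m // kmOrder T.1 = i}) :
    Finite {T : OddKMTree k m // oddRootOrder T.1 = n} := by
  have e := (oddKMTreeEquiv hm).fiberCongr (w := fun T : OddKMTree k m => oddRootOrder T.1)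
    (oddRootOrder_oddKMTreeEquiv hm)
  rcases n with _ | n
  · exact Finite.of_equiv _ ((optionFiberZeroEquiv _).symm.trans (e 0))
  · have := finite_tuple_fiber (fun i hi => h i (by omega)) m n le_rfl
    exact Finite.of_equiv _ ((optionFiberSuccEquiv _ n).symm.trans (e (n + 1)))

lemma finite_kmOrder_fiber (hm : 0 < m) (n : ℕ) :
    Finite {T : EvenKMTree k m // kmOrder T.1 = n} := by
  induction n using Nat.strong_induction_on with
  | _ n ih =>
    have := finite_tuple_fiber
      (fun i hi => finite_oddRootOrder_fiber hm fun j hj => ih j (by omega)) k n le_rfl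
    exact Finite.of_equiv _ (evenKMTreeEquiv.fiberCongr kmOrder_evenKMTreeEquiv n)

lemma countingSeries_evenKMTree (hm : 0 < m) :
    countingSeries R (fun T : EvenKMTree k m => kmOrder T.1) =
      countingSeries R (fun T : OddKMTree k m => oddRootOrder T.1) ^ k := by
  rw [← countingSeries_tuple fun n =>
    finite_oddRootOrder_fiber hm fun i _ => finite_kmOrder_fiber hm i]
  exact (countingSeries_congr evenKMTreeEquiv kmOrder_evenKMTreeEquiv).symm

lemma countingSeries_oddKMTree (hm : 0 < m) :
    countingSeries R (fun T : OddKMTree k m => oddRootOrder T.1) =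
      1 + PowerSeries.X * countingSeries R (fun T : EvenKMTree k m => kmOrder T.1) ^ m := by
  rw [← countingSeries_tuple (finite_kmOrder_fiber hm), ← countingSeries_option]
  exact (countingSeries_congr (oddKMTreeEquiv hm) (oddRootOrder_oddKMTreeEquiv hm)).symm

end PlaneTree

theorem km_ary_gf_eq_general (k m : ℕ) (hm : 1 ≤ m) :
    (PowerSeries.mk (fun n =>
        (Nat.card {T : PlaneTree // PlaneTree.IsKMAry k m false T ∧ PlaneTree.kmOrder T = n} : ℚ)))
      = (1 + PowerSeries.X * (PowerSeries.mk (fun n =>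
        (Nat.card {T : PlaneTree // PlaneTree.IsKMAry k m false T ∧ PlaneTree.kmOrder T = n} : ℚ))) ^ m) ^ k := by
  rw [← countingSeries_subtype (PlaneTree.IsKMAry k m false) PlaneTree.kmOrder]
  conv_lhs => rw [PlaneTree.countingSeries_evenKMTree hm, PlaneTree.countingSeries_oddKMTree hm]

/-- The generating function `C(z) = Σ cₙ zⁿ` for the numbers `cₙ` of `(k,m)`-ary trees of
order `n` satisfies `C = (1 + z·C^m)^k`. -/
theorem km_ary_gf_eq (k m : ℕ) (hk : 1 ≤ k) (hm : 1 ≤ m) :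
    (PowerSeries.mk (fun n =>
        (Nat.card {T : PlaneTree // PlaneTree.IsKMAry k m false T ∧ PlaneTree.kmOrder T = n} : ℚ)))
      = (1 + PowerSeries.X * (PowerSeries.mk (fun n =>
        (Nat.card {T : PlaneTree // PlaneTree.IsKMAry k m false T ∧ PlaneTree.kmOrder T = n} : ℚ))) ^ m) ^ k :=
  km_ary_gf_eq_general k m hm
end

section
/- If a formal power series C satisfies C = (1 + z·C^m)^k, then the coefficient of z^n in C equals (1/(mn+1)) * binomial((mn+1)k, n). -/
/-!
Put `B = X * C ^ m`. Then `C = (1 + B) ^ k` and `B = X * (1 + B) ^ p` with `p = k * m`, so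
`(1 + B) ^ (r + 1) = (1 + B) ^ r + X * (1 + B) ^ (p + r)`. Comparing coefficients of `X ^ (n + 1)`
gives a Pascal-type recursion in `(n, r)` for the coefficients of the powers of `1 + B`, which the
Raney numbers `r / (p * n + r) * (p * n + r).choose n` satisfy as well; by induction on `n` and
then on `r` they agree, and the theorem is the case `r = k`.
-/

open PowerSeries

/-- Raney numbers. Division by zero makes `raney p 0 0 = 0`, whereas `coeff 0 ((1 + B) ^ 0) = 1`;
hence the hypothesis `0 < r` below. -/
def raney (p r n : ℕ) : ℚ := r / (p * n + r) * (p * n + r).choose n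

theorem raney_succ_succ {p : ℕ} (hp : 0 < p) (r n : ℕ) :
    raney p (r + 1) (n + 1) = raney p r (n + 1) + raney p (p + r) n := by
  obtain ⟨N, hN⟩ : ∃ N, N = p * n + p + r := ⟨_, rfl⟩
  have hnN : n ≤ N := by nlinarith
  have h_succ : ((N + 1).choose (n + 1) : ℚ) = (N + 1) * N.choose n / (n + 1) := by
    rw [eq_div_iff (by positivity)]
    exact_mod_cast (Nat.add_one_mul_choose_eq N n).symm
  have h_right : (N.choose (n + 1) : ℚ) = N.choose n * (N - n) / (n + 1) := by
    rw [eq_div_iff (by positivity), ← Nat.cast_sub hnN]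
    exact_mod_cast Nat.choose_succ_right_eq N n
  unfold raney
  rw [show p * (n + 1) + (r + 1) = N + 1 by lia, show p * (n + 1) + r = N by lia,
    show p * n + (p + r) = N by lia]
  push_cast
  have hNq : (N : ℚ) = p * n + p + r := by exact_mod_cast hN
  rw [h_succ, h_right, hNq]
  field_simp
  ring

theorem raney_mul_self {k : ℕ} (hk : 0 < k) (m n : ℕ) :
    raney (k * m) k n = ((m * n + 1) * k).choose n / (m * n + 1) := by
  rw [raney, show k * m * n + k = (m * n + 1) * k by ring]
  push_cast
  field_simp

section FunctionalEquation

variable {p : ℕ} {B : ℚ⟦X⟧}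

theorem one_add_pow_succ_of_eq_X_mul (hB : B = X * (1 + B) ^ p) (r : ℕ) :
    (1 + B) ^ (r + 1) = (1 + B) ^ r + X * (1 + B) ^ (p + r) := by
  linear_combination (1 + B) ^ r * hB

theorem coeff_one_add_pow_of_eq_X_mul (hp : 0 < p) (hB : B = X * (1 + B) ^ p) {r : ℕ}
    (hr : 0 < r) (n : ℕ) : coeff n ((1 + B) ^ r) = raney p r n := by
  induction n generalizing r with
  | zero =>
    have hB0 : constantCoeff B = 0 := by rw [hB]; simp
    simp [hB0, raney, hr.ne']
  | succ n ih =>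
    suffices h : ∀ s, coeff (n + 1) ((1 + B) ^ s) = raney p s (n + 1) from h r
    intro s
    induction s with
    | zero => simp [coeff_one, raney]
    | succ s ihs =>
      rw [one_add_pow_succ_of_eq_X_mul hB, map_add, coeff_succ_X_mul, ihs, ih (by omega),
        raney_succ_succ hp]

end FunctionalEquation

/-- If a formal power series `C` satisfies `C = (1 + z·C^m)^k`, then the coefficient of `zⁿ`
in `C` equals `(1/(mn+1)) * binomial((mn+1)k, n)`. -/
theorem coeff_of_functional_eq (k m : ℕ) (hk : 1 ≤ k) (hm : 1 ≤ m) (C : PowerSeries ℚ)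
    (hC : C = (1 + PowerSeries.X * C ^ m) ^ k) (n : ℕ) :
    PowerSeries.coeff n C = (((m * n + 1) * k).choose n : ℚ) / (m * n + 1) := by
  have hB : X * C ^ m = X * (1 + X * C ^ m) ^ (k * m) := by
    conv_lhs => rw [hC, ← pow_mul]
  rw [hC, coeff_one_add_pow_of_eq_X_mul (by positivity) hB hk, raney_mul_self hk]
end

section
/- For m ≥ 1 and n ≥ 0, n! · Σ_{T} Π_{v∈I(T)} 1/h_v = Π_{i=0}^{n−1} (mi+1), where the sum is over all complete (m+1)-ary trees T with n internal vertices. -/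
open Polynomial

/-!
Put `w T = ∏_{v ∈ I(T)} 1 / h_v` and `S(x) = ∑_T w T x ^ |I(T)|`. Deleting the root of a tree
with `n ≥ 1` internal vertices leaves an ordered forest of `m + 1` trees with `n - 1` internal
vertices, and the root contributes `1 / n`; hence `S' = S ^ (m + 1)`, `S(0) = 1`, and
`S = (1 - m x) ^ (-1 / m)`. Power series are avoided: the coefficients `c_k(n)` of
`(1 - m x) ^ (-k / m)` satisfy `c_{a+b}(n) = ∑_{i+j=n} c_a(i) c_b(j)` and
`n c_1(n) = c_{m+1}(n - 1)`, the same recursions as the forest sums `[x ^ n] S ^ k`, so strong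
induction on `n` identifies the two; finally `n! c_1(n) = ∏_{i<n} (m i + 1)`.
-/

open Finset

/-- The coefficient of `x ^ n` in `(1 - m x) ^ (-k / m)` (in `exp (k x)` if `m = 0`). -/
noncomputable def risingCoeff (m k : ℚ) (n : ℕ) : ℚ :=
  (∏ i ∈ range n, (k + m * i)) / n.factorial

section risingCoeff

variable (m k : ℚ)

@[simp]
lemma risingCoeff_zero_right : risingCoeff m k 0 = 1 := by
  simp [risingCoeff]

lemma risingCoeff_zero_left (n : ℕ) : risingCoeff m 0 n = if n = 0 then 1 else 0 := by
  cases n <;> simp [risingCoeff, prod_range_succ']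

lemma succ_mul_risingCoeff_succ (n : ℕ) :
    (n + 1) * risingCoeff m k (n + 1) = (k + m * n) * risingCoeff m k n := by
  simp only [risingCoeff, prod_range_succ, Nat.factorial_succ]
  push_cast
  field_simp

lemma factorial_mul_risingCoeff (n : ℕ) :
    n.factorial * risingCoeff m k n = ∏ i ∈ range n, (k + m * i) :=
  mul_div_cancel₀ _ (Nat.cast_ne_zero.mpr n.factorial_ne_zero)

lemma eq_risingCoeff_of_succ_mul {u : ℕ → ℚ} (h0 : u 0 = 1)
    (hsucc : ∀ n : ℕ, (n + 1) * u (n + 1) = (k + m * n) * u n) :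
    ∀ n, u n = risingCoeff m k n
  | 0 => by rw [h0, risingCoeff_zero_right]
  | n + 1 => mul_left_cancel₀ n.cast_add_one_ne_zero <| by
      rw [hsucc, succ_mul_risingCoeff_succ, eq_risingCoeff_of_succ_mul h0 hsucc n]

lemma risingCoeff_add (a b : ℚ) (n : ℕ) :
    risingCoeff m (a + b) n =
      ∑ p ∈ antidiagonal n, risingCoeff m a p.1 * risingCoeff m b p.2 := by
  set f : ℕ × ℕ → ℚ := fun p => risingCoeff m a p.1 * risingCoeff m b p.2
  refine (eq_risingCoeff_of_succ_mul m (a + b) (u := fun n => ∑ p ∈ antidiagonal n, f p)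
    (by simp [f]) (fun n => ?_) n).symm
  calc (n + 1 : ℚ) * ∑ p ∈ antidiagonal (n + 1), f p
      = ∑ p ∈ antidiagonal (n + 1), (p.1 * f p + p.2 * f p) := by
        rw [mul_sum]
        refine sum_congr rfl fun p hp => ?_
        rw [← add_mul, ← Nat.cast_add, mem_antidiagonal.mp hp]
        push_cast; ring
    _ = ∑ p ∈ antidiagonal n, ((a + m * p.1) * f p + (b + m * p.2) * f p) := by
        rw [sum_add_distrib, Nat.sum_antidiagonal_succ, Nat.sum_antidiagonal_succ',
          sum_add_distrib]
        simp only [f, Nat.cast_zero, zero_mul, zero_add, Nat.cast_add_one]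
        congr 1 <;> refine sum_congr rfl fun p _ => ?_
        · rw [← mul_assoc, succ_mul_risingCoeff_succ]; ring
        · rw [mul_left_comm, succ_mul_risingCoeff_succ]; ring
    _ = (a + b + m * n) * ∑ p ∈ antidiagonal n, f p := by
        rw [mul_sum]
        refine sum_congr rfl fun p hp => ?_
        rw [← mem_antidiagonal.mp hp]
        push_cast; ring

lemma succ_mul_risingCoeff_one_succ (n : ℕ) :
    (n + 1) * risingCoeff m 1 (n + 1) = risingCoeff m (m + 1) n := by
  simp only [risingCoeff, prod_range_succ', Nat.factorial_succ]
  push_cast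
  field_simp
  rw [mul_zero, add_zero, mul_one]
  exact prod_congr rfl fun i _ => by ring

end risingCoeff

lemma List.finite_setOf_length_le_of_forall_mem {α : Type*} {s : Set α} (hs : s.Finite)
    (n : ℕ) : {l : List α | l.length ≤ n ∧ ∀ x ∈ l, x ∈ s}.Finite := by
  have := hs.to_subtype
  refine ((List.finite_length_le s n).image (List.map Subtype.val)).subset ?_
  rintro l ⟨hl, hmem⟩
  lift l to List s using hmem
  exact ⟨l, by simpa using hl, rfl⟩

namespace PlaneTree

@[simp]
lemma numVertices_node (ts : List PlaneTree) :
    numVertices (node ts) = 1 + (ts.map numVertices).sum := by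
  simp [numVertices]

@[simp]
lemma numInternal_node (ts : List PlaneTree) :
    numInternal (node ts) = (if ts = [] then 0 else 1) + (ts.map numInternal).sum := by
  simp [numInternal]

lemma internalHookProd_node {α : Type} [CommMonoid α] (g : ℕ → α) (ts : List PlaneTree) :
    internalHookProd g (node ts) =
      (if ts = [] then 1 else g (numInternal (node ts))) * (ts.map (internalHookProd g)).prod := by
  simp [internalHookProd]

@[simp]
lemma isFullAry_node {a : ℕ} {ts : List PlaneTree} :
    IsFullAry a (node ts) ↔ (ts.length = 0 ∨ ts.length = a) ∧ ∀ t ∈ ts, IsFullAry a t := by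
  rw [IsFullAry]

lemma one_le_numVertices (T : PlaneTree) : 1 ≤ numVertices T := by
  cases T; simp

theorem numVertices_eq_of_isFullAry {a : ℕ} :
    ∀ {T : PlaneTree}, IsFullAry a T → numVertices T = a * numInternal T + 1
  | node ts, h => by
    rw [isFullAry_node] at h
    have ih : ∀ t ∈ ts, numVertices t = a * numInternal t + 1 :=
      fun t ht => numVertices_eq_of_isFullAry (h.2 t ht)
    rw [numVertices_node, numInternal_node, List.map_congr_left ih]
    rcases eq_or_ne ts [] with rfl | hne
    · simp
    · have ha : ts.length = a := h.1.resolve_left (by simpa using hne)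
      simp [List.sum_map_add, List.sum_map_mul_left, ha, hne]
      ring

theorem finite_setOf_numVertices_le : ∀ N : ℕ, {T : PlaneTree | numVertices T ≤ N}.Finite
  | 0 => Set.finite_empty.subset fun T (hT : numVertices T ≤ 0) =>
    absurd (one_le_numVertices T) (by omega)
  | N + 1 => by
    refine ((List.finite_setOf_length_le_of_forall_mem (finite_setOf_numVertices_le N) N).image
      node).subset ?_
    rintro ⟨ts⟩ (hT : numVertices (node ts) ≤ N + 1)
    rw [numVertices_node] at hT
    have hmem : ∀ t ∈ ts, numVertices t ≤ (ts.map numVertices).sum :=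
      fun t ht => List.le_sum_of_mem (List.mem_map_of_mem ht)
    have hlen := List.length_le_sum_of_one_le (ts.map numVertices) (by simp [one_le_numVertices])
    rw [List.length_map] at hlen
    exact ⟨ts, ⟨by omega, fun t ht => (hmem t ht).trans (by omega)⟩, rfl⟩

variable (a : ℕ)

lemma finite_setOf_isFullAry_numInternal_le (n : ℕ) :
    {T : PlaneTree | IsFullAry a T ∧ numInternal T ≤ n}.Finite :=
  (finite_setOf_numVertices_le (a * n + 1)).subset fun T ⟨hT, hn⟩ =>
    show numVertices T ≤ a * n + 1 by rw [numVertices_eq_of_isFullAry hT]; gcongr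

lemma finite_setOf_isFullAry_numInternal_eq (n : ℕ) :
    {T : PlaneTree | IsFullAry a T ∧ numInternal T = n}.Finite :=
  (finite_setOf_isFullAry_numInternal_le a n).subset fun _ hT => ⟨hT.1, hT.2.le⟩

lemma finite_setOf_fullForest (k n : ℕ) :
    {l : List PlaneTree | l.length = k ∧ (∀ t ∈ l, IsFullAry a t) ∧
      (l.map numInternal).sum = n}.Finite :=
  (List.finite_setOf_length_le_of_forall_mem (finite_setOf_isFullAry_numInternal_le a n) k).subset
    fun _ ⟨hk, hfull, hn⟩ => ⟨hk.le, fun t ht =>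
      ⟨hfull t ht, hn ▸ List.le_sum_of_mem (List.mem_map_of_mem ht)⟩⟩

noncomputable def fullTrees (n : ℕ) : Finset PlaneTree :=
  (finite_setOf_isFullAry_numInternal_eq a n).toFinset

noncomputable def fullForests (k n : ℕ) : Finset (List PlaneTree) :=
  (finite_setOf_fullForest a k n).toFinset

variable {a}

@[simp]
lemma mem_fullTrees {n : ℕ} {T : PlaneTree} :
    T ∈ fullTrees a n ↔ IsFullAry a T ∧ numInternal T = n :=
  Set.Finite.mem_toFinset _

@[simp]
lemma mem_fullForests {k n : ℕ} {l : List PlaneTree} :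
    l ∈ fullForests a k n ↔
      l.length = k ∧ (∀ t ∈ l, IsFullAry a t) ∧ (l.map numInternal).sum = n :=
  Set.Finite.mem_toFinset _

lemma fullTrees_zero : fullTrees a 0 = {node []} := by
  ext ⟨ts⟩
  rcases eq_or_ne ts [] with rfl | hne <;> simp [*]

lemma fullForests_zero (n : ℕ) : fullForests a 0 n = if n = 0 then {[]} else ∅ := by
  ext l
  rcases l with _ | ⟨t, l⟩ <;> split_ifs <;> simp_all [eq_comm]

lemma sum_fullTrees_succ {M : Type*} [AddCommMonoid M] (f : PlaneTree → M) (ha : a ≠ 0)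
    (n : ℕ) : ∑ T ∈ fullTrees a (n + 1), f T = ∑ l ∈ fullForests a a n, f (node l) := by
  symm
  refine sum_bij (fun l _ => node l) ?_ (fun _ _ _ _ h => node.inj h) ?_ (fun _ _ => rfl)
  · intro l hl
    obtain ⟨hlen, hfull, hsum⟩ := mem_fullForests.mp hl
    have hne : l ≠ [] := by rintro rfl; exact ha hlen.symm
    exact mem_fullTrees.mpr
      ⟨isFullAry_node.mpr ⟨Or.inr hlen, hfull⟩, by simp [hne, hsum, add_comm]⟩
  · rintro ⟨l⟩ hT
    simp only [mem_fullTrees, isFullAry_node, numInternal_node] at hT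
    have hne : l ≠ [] := by rintro rfl; simp at hT
    refine ⟨l, ?_, rfl⟩
    simp_all [List.length_eq_zero_iff]
    omega

lemma sum_fullForests_succ {R : Type*} [CommSemiring R] (w : PlaneTree → R) (k n : ℕ) :
    ∑ l ∈ fullForests a (k + 1) n, (l.map w).prod =
      ∑ p ∈ antidiagonal n,
        (∑ T ∈ fullTrees a p.1, w T) * ∑ l ∈ fullForests a k p.2, (l.map w).prod := by
  simp_rw [sum_mul_sum, ← sum_product']
  rw [sum_sigma']
  symm
  refine sum_bij (fun x _ => x.2.1 :: x.2.2) ?_ ?_ ?_ (fun _ _ => List.prod_cons)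
  · rintro ⟨⟨i, j⟩, t, l⟩ hx
    simp only [mem_sigma, HasAntidiagonal.mem_antidiagonal, mem_product, mem_fullTrees,
      mem_fullForests] at hx
    obtain ⟨hij, ⟨ht, rfl⟩, hlen, hl, rfl⟩ := hx
    simp_all
  · rintro ⟨⟨i, j⟩, t, l⟩ hx ⟨⟨i', j'⟩, t', l'⟩ hx' h
    simp only [mem_sigma, HasAntidiagonal.mem_antidiagonal, mem_product, mem_fullTrees,
      mem_fullForests] at hx hx'
    obtain ⟨rfl, rfl⟩ := List.cons_eq_cons.mp h
    obtain ⟨-, ⟨-, rfl⟩, -, -, rfl⟩ := hx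
    obtain ⟨-, ⟨-, rfl⟩, -, -, rfl⟩ := hx'
    rfl
  · rintro (_ | ⟨t, l⟩) hl
    · simp at hl
    simp only [mem_fullForests, List.length_cons, List.mem_cons, forall_eq_or_imp,
      List.map_cons, List.sum_cons] at hl
    obtain ⟨hlen, ⟨ht, hl⟩, hsum⟩ := hl
    exact ⟨⟨(numInternal t, (l.map numInternal).sum), (t, l)⟩, by simp_all, rfl⟩

lemma sum_fullForests_one {R : Type*} [CommSemiring R] (w : PlaneTree → R) (n : ℕ) :
    ∑ l ∈ fullForests a 1 n, (l.map w).prod = ∑ T ∈ fullTrees a n, w T := by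
  symm
  refine sum_bij (fun T _ => [T]) (fun T hT => by simp_all)
    (fun _ _ _ _ => List.singleton_inj.mp) ?_ (fun _ _ => by simp)
  intro l hl
  obtain ⟨T, rfl⟩ := List.length_eq_one_iff.mp (mem_fullForests.mp hl).1
  exact ⟨T, by simp_all, rfl⟩

noncomputable def hookWeight (T : PlaneTree) : ℚ :=
  internalHookProd (fun h => 1 / (h : ℚ)) T

@[simp]
lemma hookWeight_leaf : hookWeight (node []) = 1 := by
  simp [hookWeight, internalHookProd_node]

lemma hookWeight_node {l : List PlaneTree} (hne : l ≠ []) :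
    hookWeight (node l) = (l.map hookWeight).prod / numInternal (node l) := by
  rw [hookWeight, internalHookProd_node, if_neg hne, one_div_mul_eq_div]
  rfl

lemma sum_hookWeight_fullTrees_succ (ha : a ≠ 0) (n : ℕ) :
    ∑ T ∈ fullTrees a (n + 1), hookWeight T =
      (∑ l ∈ fullForests a a n, (l.map hookWeight).prod) / (n + 1) := by
  rw [sum_fullTrees_succ _ ha, sum_div]
  refine sum_congr rfl fun l hl => ?_
  obtain ⟨hlen, -, hsum⟩ := mem_fullForests.mp hl
  have hne : l ≠ [] := by rintro rfl; exact ha hlen.symm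
  rw [hookWeight_node hne, numInternal_node, if_neg hne, hsum, add_comm]
  push_cast
  rfl

theorem sum_hookWeight_fullForests (m k n : ℕ) :
    ∑ l ∈ fullForests (m + 1) k n, (l.map hookWeight).prod = risingCoeff m k n := by
  induction n using Nat.strong_induction_on generalizing k with
  | _ n ih =>
  have htrees : ∀ j ≤ n, ∑ T ∈ fullTrees (m + 1) j, hookWeight T = risingCoeff m 1 j := by
    rintro (_ | j) hj
    · simp [fullTrees_zero]
    · rw [sum_hookWeight_fullTrees_succ m.succ_ne_zero, ih j (by omega), Nat.cast_add_one,
        ← succ_mul_risingCoeff_one_succ, mul_div_cancel_left₀ _ j.cast_add_one_ne_zero]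
  induction k with
  | zero =>
    rw [fullForests_zero, Nat.cast_zero, risingCoeff_zero_left]
    split_ifs <;> simp
  | succ k ihk =>
    rw [sum_fullForests_succ, Nat.cast_add_one, add_comm (k : ℚ), risingCoeff_add]
    refine sum_congr rfl fun p hp => ?_
    have hpn : p.1 + p.2 = n := mem_antidiagonal.mp hp
    rw [htrees p.1 (by omega)]
    rcases (show p.2 ≤ n by omega).lt_or_eq with hlt | heq
    · rw [ih p.2 hlt]
    · rw [heq, ihk]

end PlaneTree

theorem hook_reciprocal_sum_mary_general (m n : ℕ) :
    (n.factorial : ℚ) *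
      ∑ᶠ T : {T : PlaneTree // PlaneTree.IsFullAry (m + 1) T ∧ PlaneTree.numInternal T = n},
        PlaneTree.internalHookProd (fun h => 1 / (h : ℚ)) T.1
      = ∏ i ∈ Finset.range n, ((m * i + 1 : ℕ) : ℚ) := by
  rw [finsum_subtype_eq_finsum_cond,
    finsum_cond_eq_sum_of_cond_iff _ fun _ => PlaneTree.mem_fullTrees.symm]
  change _ * ∑ T ∈ PlaneTree.fullTrees (m + 1) n, PlaneTree.hookWeight T = _
  rw [← PlaneTree.sum_fullForests_one, PlaneTree.sum_hookWeight_fullForests,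
    factorial_mul_risingCoeff]
  exact prod_congr rfl fun i _ => by push_cast; ring

/-- `n! · Σ_T Π_{v∈I(T)} 1/h_v = Π_{i=0}^{n-1} (mi+1)`, summed over all complete
`(m+1)`-ary trees `T` with `n` internal vertices. -/
theorem hook_reciprocal_sum_mary (m n : ℕ) (hm : 1 ≤ m) :
    (n.factorial : ℚ) *
      ∑ᶠ T : {T : PlaneTree // PlaneTree.IsFullAry (m + 1) T ∧ PlaneTree.numInternal T = n},
        PlaneTree.internalHookProd (fun h => 1 / (h : ℚ)) T.1
      = ∏ i ∈ Finset.range n, ((m * i + 1 : ℕ) : ℚ) :=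
  hook_reciprocal_sum_mary_general m n
end
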